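/- Let m ≥ 1 and let p₁ ≠ p₂ be points of ℝᵐ. Let K₁, K₂ ⊆ ℝᵐ be compact sets containing 0, and let E₁, E₂ be maps defined on neighborhoods of K₁, K₂ respectively, each differentiable at 0 with Eᵢ(0) = pᵢ (in fact C¹ on a neighborhood of 0 suffices). Define the rescaled sets Aᵢ(s) = { e^s · Eᵢ(e^{−s} z) : z ∈ Kᵢ }. Then there exists s₀ such that for all s ≥ s₀, the sets A₁(s) and A₂(s) are separated by an affine hyperplane of ℝᵐ. -/

import Mathlib

open scoped RealInnerProductSpace

/-!
Differentiability at `0` makes `t • (E (t⁻¹ • z) - E 0)` bounded uniformly for `z` in a bounded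
set once `t` is large, so each rescaled set stays in a ball of fixed radius around `eˢ • pᵢ`.
These centres drift apart like `eˢ ‖p₂ - p₁‖`, and the hyperplane orthogonal to the segment
between them, through its midpoint, eventually separates the two balls.
-/

open Filter Topology

section Rescaling

variable {E F : Type*} [NormedAddCommGroup E] [NormedSpace ℝ E]
  [NormedAddCommGroup F] [NormedSpace ℝ F]

theorem tendsto_inv_smul_atTop_prod_principal {K : Set E} (hK : Bornology.IsBounded K) :
    Tendsto (fun p : ℝ × E => p.1⁻¹ • p.2) (atTop ×ˢ 𝓟 K) (𝓝 0) := by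
  obtain ⟨R, hR⟩ := hK.exists_norm_le
  refine (tendsto_inv_atTop_zero.comp tendsto_fst).zero_smul_isBoundedUnder_le ⟨R, ?_⟩
  exact eventually_map.2 (mem_prod_principal.2 (Eventually.of_forall fun _ z hz => hR z hz))

theorem DifferentiableAt.exists_eventually_norm_smul_sub_le {f : E → F}
    (hf : DifferentiableAt ℝ f 0) {K : Set E} (hK : Bornology.IsBounded K) :
    ∃ B, ∀ᶠ t : ℝ in atTop, ∀ z ∈ K, ‖t • f (t⁻¹ • z) - t • f 0‖ ≤ B := by
  obtain ⟨C, hC, hfC⟩ := hf.isBigO_sub.exists_pos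
  obtain ⟨R, hR⟩ := hK.exists_norm_le
  have hnear := (tendsto_inv_smul_atTop_prod_principal hK).eventually hfC.bound
  refine ⟨C * R, ?_⟩
  filter_upwards [eventually_prod_principal_iff.1 hnear, eventually_gt_atTop 0] with t ht ht₀ z hz
  calc ‖t • f (t⁻¹ • z) - t • f 0‖ = t * ‖f (t⁻¹ • z) - f 0‖ := by
        rw [← smul_sub, norm_smul, Real.norm_of_nonneg ht₀.le]
    _ ≤ t * (C * ‖t⁻¹ • z - 0‖) := by gcongr; exact ht z hz
    _ = C * ‖z‖ := by
        rw [sub_zero, norm_smul, Real.norm_of_nonneg (inv_nonneg.2 ht₀.le)]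
        field_simp
    _ ≤ C * R := by gcongr; exact hR z hz

end Rescaling

section Separation

variable {V : Type*} [NormedAddCommGroup V] [InnerProductSpace ℝ V]

theorem abs_inner_sub_lt_half_sq_norm {v x c : V} {B : ℝ} (hx : ‖x - c‖ ≤ B)
    (hB : 2 * B < ‖v‖) : |⟪v, x - c⟫| < ‖v‖ ^ 2 / 2 := by
  have hv : 0 < ‖v‖ := by linarith [norm_nonneg (x - c)]
  calc |⟪v, x - c⟫| ≤ ‖v‖ * ‖x - c‖ := abs_real_inner_le_norm v (x - c)
    _ ≤ ‖v‖ * B := by gcongr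
    _ < ‖v‖ * (‖v‖ / 2) := by gcongr; linarith
    _ = ‖v‖ ^ 2 / 2 := by ring

theorem exists_inner_lt_lt_of_norm_sub_le {A₁ A₂ : Set V} {c₁ c₂ : V} {B : ℝ}
    (hB : 2 * B < ‖c₂ - c₁‖) (h₁ : ∀ x ∈ A₁, ‖x - c₁‖ ≤ B) (h₂ : ∀ y ∈ A₂, ‖y - c₂‖ ≤ B) :
    ∃ r : ℝ, (∀ x ∈ A₁, ⟪c₂ - c₁, x⟫ < r) ∧ ∀ y ∈ A₂, r < ⟪c₂ - c₁, y⟫ := by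
  have hc : ⟪c₂ - c₁, c₂⟫ = ⟪c₂ - c₁, c₁⟫ + ‖c₂ - c₁‖ ^ 2 := by
    rw [← real_inner_self_eq_norm_sq, inner_sub_right]; ring
  refine ⟨⟪c₂ - c₁, c₁⟫ + ‖c₂ - c₁‖ ^ 2 / 2, fun x hx => ?_, fun y hy => ?_⟩
  · have := (abs_lt.1 (abs_inner_sub_lt_half_sq_norm (h₁ x hx) hB)).2
    rw [inner_sub_right] at this
    linarith
  · have := (abs_lt.1 (abs_inner_sub_lt_half_sq_norm (h₂ y hy) hB)).1
    rw [inner_sub_right] at this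
    linarith

end Separation

theorem stmt_4_general (m : ℕ) (p₁ p₂ : EuclideanSpace ℝ (Fin m)) (hp : p₁ ≠ p₂)
    (K₁ K₂ : Set (EuclideanSpace ℝ (Fin m)))
    (hK₁ : IsCompact K₁) (hK₂ : IsCompact K₂)
    (E₁ E₂ : EuclideanSpace ℝ (Fin m) → EuclideanSpace ℝ (Fin m))
    (hE₁ : DifferentiableAt ℝ E₁ 0) (hE₂ : DifferentiableAt ℝ E₂ 0)
    (hE₁0 : E₁ 0 = p₁) (hE₂0 : E₂ 0 = p₂) :
    ∃ s₀ : ℝ, ∀ s : ℝ, s₀ ≤ s →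
      ∃ (v : EuclideanSpace ℝ (Fin m)) (r : ℝ), v ≠ 0 ∧
        (∀ z ∈ K₁, ⟪v, Real.exp s • E₁ (Real.exp (-s) • z)⟫ < r) ∧
        (∀ z ∈ K₂, r < ⟪v, Real.exp s • E₂ (Real.exp (-s) • z)⟫) := by
  obtain ⟨B₁, hB₁⟩ := hE₁.exists_eventually_norm_smul_sub_le hK₁.isBounded
  obtain ⟨B₂, hB₂⟩ := hE₂.exists_eventually_norm_smul_sub_le hK₂.isBounded
  have hgap : ∀ᶠ s in atTop, 2 * max B₁ B₂ < ‖Real.exp s • p₂ - Real.exp s • p₁‖ := by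
    simp only [← smul_sub, norm_smul, Real.norm_of_nonneg (Real.exp_pos _).le]
    exact (Real.tendsto_exp_atTop.atTop_mul_const
      (norm_pos_iff.2 (sub_ne_zero.2 hp.symm))).eventually_gt_atTop _
  obtain ⟨s₀, hs₀⟩ := eventually_atTop.1 <|
    (Real.tendsto_exp_atTop.eventually hB₁).and ((Real.tendsto_exp_atTop.eventually hB₂).and hgap)
  refine ⟨s₀, fun s hs => ?_⟩
  obtain ⟨h₁, h₂, hsep⟩ := hs₀ s hs
  obtain ⟨r, hr₁, hr₂⟩ := exists_inner_lt_lt_of_norm_sub_le hsep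
    (A₁ := (fun z => Real.exp s • E₁ (Real.exp (-s) • z)) '' K₁)
    (A₂ := (fun z => Real.exp s • E₂ (Real.exp (-s) • z)) '' K₂)
    (Set.forall_mem_image.2 fun z hz => by
      rw [Real.exp_neg, ← hE₁0]; exact (h₁ z hz).trans (le_max_left _ _))
    (Set.forall_mem_image.2 fun z hz => by
      rw [Real.exp_neg, ← hE₂0]; exact (h₂ z hz).trans (le_max_right _ _))
  exact ⟨_, r, sub_ne_zero.2 ((smul_right_injective _ (Real.exp_pos s).ne').ne hp.symm),
    fun z hz => hr₁ _ (Set.mem_image_of_mem _ hz), fun z hz => hr₂ _ (Set.mem_image_of_mem _ hz)⟩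

/-- Rescaled images of star-shaped sets around distinct points are eventually
separated by an affine hyperplane. -/
theorem stmt_4 (m : ℕ) (hm : 1 ≤ m) (p₁ p₂ : EuclideanSpace ℝ (Fin m)) (hp : p₁ ≠ p₂)
    (K₁ K₂ : Set (EuclideanSpace ℝ (Fin m)))
    (hK₁ : IsCompact K₁) (hK₂ : IsCompact K₂) (h0₁ : (0:EuclideanSpace ℝ (Fin m)) ∈ K₁)
    (h0₂ : (0:EuclideanSpace ℝ (Fin m)) ∈ K₂)
    (E₁ E₂ : EuclideanSpace ℝ (Fin m) → EuclideanSpace ℝ (Fin m))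
    (hE₁ : DifferentiableAt ℝ E₁ 0) (hE₂ : DifferentiableAt ℝ E₂ 0)
    (hE₁0 : E₁ 0 = p₁) (hE₂0 : E₂ 0 = p₂) :
    ∃ s₀ : ℝ, ∀ s : ℝ, s₀ ≤ s →
      ∃ (v : EuclideanSpace ℝ (Fin m)) (r : ℝ), v ≠ 0 ∧
        (∀ z ∈ K₁, ⟪v, Real.exp s • E₁ (Real.exp (-s) • z)⟫ < r) ∧
        (∀ z ∈ K₂, r < ⟪v, Real.exp s • E₂ (Real.exp (-s) • z)⟫) :=
  stmt_4_general m p₁ p₂ hp K₁ K₂ hK₁ hK₂ E₁ E₂ hE₁ hE₂ hE₁0 hE₂0
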